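/- Suppose the non-concentration assumption holds on a set I ⊂ ℝ with exponent δ > 0. Then there exists C < ∞ such that for all n ≥ 1, all t ∈ I and all α ≠ 0: P( |F_n(t)| ≥ |α|^{−1} ) ≤ C·2^{(c−δ)n}·|α|, where F_n(t) = ⟨φ_n, (H_{n,n−1} − t)^{−1} φ_n⟩ (defined almost surely). -/

import Mathlib

open MeasureTheory ProbabilityTheory Matrix Filter Topology

noncomputable section

/-- Hierarchical (ultrametric) distance on `ℕ₀ = {0,1,2,…}`:
`d(j,k) = min {r ≥ 0 | ⌊j/2^r⌋ = ⌊k/2^r⌋}`. -/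
def hdist (j k : ℕ) : ℕ := sInf {r | j / 2 ^ r = k / 2 ^ r}

lemma hdist_comm (j k : ℕ) : hdist j k = hdist k j := by
  unfold hdist; congr 1; ext r; exact eq_comm

/-- Matrix entry of the hierarchical Laplacian `Δ = ∑_{r ≥ 1} p_r E_r`,
restricted to a block `B_n` (the entry only depends on the hierarchical distance):
`Δ(j,k) = ∑_{r ≥ max(1, d(j,k))} p_r · 2^{-r}`. -/
def lapEntry (p : ℕ → ℝ) (j k : ℕ) : ℝ :=
  ∑' r : ℕ, if 1 ≤ r ∧ hdist j k ≤ r then p r / 2 ^ r else 0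

/-- Matrix entry of the truncated Laplacian `∑_{r = 1}^{m} p_r E_r`. -/
def lapEntryT (p : ℕ → ℝ) (m : ℕ) (j k : ℕ) : ℝ :=
  ∑ r ∈ Finset.Icc 1 m, if hdist j k ≤ r then p r / 2 ^ r else 0

/-- The finite-volume Hamiltonian `H_n = 1_{B_n} (Δ + V) 1_{B_n}`
as a real symmetric `2^n × 2^n` matrix. -/
def Hmat (p : ℕ → ℝ) (v : ℕ → ℝ) (n : ℕ) : Matrix (Fin (2 ^ n)) (Fin (2 ^ n)) ℝ :=
  fun j k => lapEntry p j k + if j = k then v j else 0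

/-- The truncated finite-volume Hamiltonian
`H_{n,m} = 1_{B_n} (∑_{r=1}^m p_r E_r + V) 1_{B_n}`. -/
def HmatT (p : ℕ → ℝ) (v : ℕ → ℝ) (n m : ℕ) : Matrix (Fin (2 ^ n)) (Fin (2 ^ n)) ℝ :=
  fun j k => lapEntryT p m j k + if j = k then v j else 0

lemma Hmat_isHermitian (p : ℕ → ℝ) (v : ℕ → ℝ) (n : ℕ) : (Hmat p v n).IsHermitian := by
  refine Matrix.ext fun j k => ?_
  simp only [conjTranspose_apply, star_trivial, Hmat, lapEntry, hdist_comm (k : ℕ) (j : ℕ)]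
  rcases eq_or_ne j k with h | h
  · subst h; rfl
  · simp [h, h.symm]

lemma HmatT_isHermitian (p : ℕ → ℝ) (v : ℕ → ℝ) (n m : ℕ) : (HmatT p v n m).IsHermitian := by
  refine Matrix.ext fun j k => ?_
  simp only [conjTranspose_apply, star_trivial, HmatT, lapEntryT, hdist_comm (k : ℕ) (j : ℕ)]
  rcases eq_or_ne j k with h | h
  · subst h; rfl
  · simp [h, h.symm]

/-- The site `0 ∈ B_n`. -/
def fin0 (n : ℕ) : Fin (2 ^ n) := ⟨0, Nat.two_pow_pos n⟩

/-- The hierarchical renormalization recursion: `W^{(0)}_k = x_k` and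
`W^{(j+1)}_k = (1/(2 W^{(j)}_{2k}) + 1/(2 W^{(j)}_{2k+1}))⁻¹ + p_{j+1}`. -/
def renIter (p : ℕ → ℝ) : ℕ → (ℕ → ℝ) → (ℕ → ℝ)
  | 0, x => x
  | (j + 1), x => fun k =>
      (1 / (2 * renIter p j x (2 * k)) + 1 / (2 * renIter p j x (2 * k + 1)))⁻¹ + p (j + 1)

/-- Non-concentration assumption on the set `I` with exponent `δ`: the law of the `r`-fold
renormalized potential `W^{(r)}_0` (started from i.i.d. inputs `V_k - E`) is absolutely
continuous with a density `T_{p_r} ⋯ T_{p_1} ρ_E` bounded by `K · 2^{(c-δ) r}`, uniformly in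
`E ∈ I`; equivalently, `P(W^{(r)}_0 ∈ A) ≤ K · 2^{(c-δ) r} · |A|` for every Borel set `A`. -/
def NonConc {Ω : Type*} [MeasurableSpace Ω] (Pr : Measure Ω)
    (p : ℕ → ℝ) (V : ℕ → Ω → ℝ) (I : Set ℝ) (c δ : ℝ) : Prop :=
  ∃ K : ℝ, 0 ≤ K ∧ ∀ r : ℕ, 1 ≤ r → ∀ E ∈ I, ∀ A : Set ℝ, MeasurableSet A →
    Pr {ω | renIter p r (fun k => V k ω - E) 0 ∈ A} ≤
      ENNReal.ofReal (K * 2 ^ ((c - δ) * r)) * volume A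

/-- `2k ∈ B_{n+1}` for `k ∈ B_n`. -/
def dblFin {n : ℕ} (k : Fin (2 ^ n)) : Fin (2 ^ (n + 1)) :=
  ⟨2 * k, by have h := k.isLt; rw [pow_succ]; omega⟩

/-- `2k + 1 ∈ B_{n+1}` for `k ∈ B_n`. -/
def dblFin1 {n : ℕ} (k : Fin (2 ^ n)) : Fin (2 ^ (n + 1)) :=
  ⟨2 * k + 1, by have h := k.isLt; rw [pow_succ]; omega⟩

/-- Hopping sequence `(p_{r+1})_{r ≥ 1}` of the renormalized model. -/
def shiftSeq (p : ℕ → ℝ) : ℕ → ℝ := fun r => p (r + 1)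

/-- The renormalized potential `(RV)_k = 2 V_{2k} V_{2k+1}/(V_{2k} + V_{2k+1}) + p_1`. -/
def renPotM (p : ℕ → ℝ) (v : ℕ → ℝ) : ℕ → ℝ :=
  fun k => 2 * v (2 * k) * v (2 * k + 1) / (v (2 * k) + v (2 * k + 1)) + p 1

/-- The renormalized potential `(RV)_k = (1/(2 V_{2k}) + 1/(2 V_{2k+1}))⁻¹ + p_1`. -/
def renPotH (p : ℕ → ℝ) (v : ℕ → ℝ) : ℕ → ℝ :=
  fun k => (1 / (2 * v (2 * k)) + 1 / (2 * v (2 * k + 1)))⁻¹ + p 1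

/-- The isometry `U_e : ℓ²(B_n) → ℓ²(B_{n+1})`, `U_e δ_k = (δ_{2k} + δ_{2k+1})/√2`,
as a `2^{n+1} × 2^n` matrix. -/
def Uemat (n : ℕ) : Matrix (Fin (2 ^ (n + 1))) (Fin (2 ^ n)) ℝ :=
  fun j k => if (j : ℕ) = 2 * k then (Real.sqrt 2)⁻¹
    else if (j : ℕ) = 2 * k + 1 then (Real.sqrt 2)⁻¹ else 0

/-- The isometry `U_f : ℓ²(B_n) → ℓ²(B_{n+1})`, `U_f δ_k = (δ_{2k} - δ_{2k+1})/√2`,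
as a `2^{n+1} × 2^n` matrix. -/
def Ufmat (n : ℕ) : Matrix (Fin (2 ^ (n + 1))) (Fin (2 ^ n)) ℝ :=
  fun j k => if (j : ℕ) = 2 * k then (Real.sqrt 2)⁻¹
    else if (j : ℕ) = 2 * k + 1 then -(Real.sqrt 2)⁻¹ else 0

/-- The unitary `U = U_e ⊕ U_f : ℓ²(B_n) ⊕ ℓ²(B_n) → ℓ²(B_{n+1})`. -/
def Umat (n : ℕ) : Matrix (Fin (2 ^ (n + 1))) (Fin (2 ^ n) ⊕ Fin (2 ^ n)) ℝ :=
  Matrix.fromCols (Uemat n) (Ufmat n)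

/-- `V_ff = V_ee`: multiplication by `(V_{2k} + V_{2k+1})/2` on `ℓ²(B_n)`. -/
def Vffmat (v : ℕ → ℝ) (n : ℕ) : Matrix (Fin (2 ^ n)) (Fin (2 ^ n)) ℝ :=
  Matrix.diagonal fun k => (v (2 * k) + v (2 * k + 1)) / 2

/-- `V_fe = V_ef`: multiplication by `(V_{2k} - V_{2k+1})/2` on `ℓ²(B_n)`. -/
def Vfemat (v : ℕ → ℝ) (n : ℕ) : Matrix (Fin (2 ^ n)) (Fin (2 ^ n)) ℝ :=
  Matrix.diagonal fun k => (v (2 * k) - v (2 * k + 1)) / 2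

/-- The operator `S = U_e^* - V_fe V_ff^{-1} U_f^* : ℓ²(B_{n+1}) → ℓ²(B_n)`. -/
def Smat (v : ℕ → ℝ) (n : ℕ) : Matrix (Fin (2 ^ n)) (Fin (2 ^ (n + 1))) ℝ :=
  (Uemat n)ᵀ - Vfemat v n * (Vffmat v n)⁻¹ * (Ufmat n)ᵀ

/-- The maximally delocalized vector `φ_n = 2^{-n/2} 1_{B_n}`. -/
def phiVec (n : ℕ) : Fin (2 ^ n) → ℝ := fun _ => (Real.sqrt (2 ^ n))⁻¹

end

/-!
Conjugating `H_{n+1,n} - t` by the orthogonal matrix `U = U_e ⊕ U_f`, which pairs each site `2k`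
with its sibling `2k + 1`, gives a block matrix whose `f`-blocks are diagonal, while `φ_{n+1}` is
mapped to `φ_n` in the `e`-component. Eliminating the `f`-component by a Schur complement shows
that `⟨φ_{n+1}, (H_{n+1,n} - t)⁻¹ φ_{n+1}⟩` is the same quadratic form on `B_n` for the hopping
`(p_{r+1})` and the renormalized potential `W^{(1)}`; iterating down to a single site gives
`F_n(t) = (W^{(n)}_0 - p_n)⁻¹` for the inputs `V_k - t`, as long as no denominator of the recursion
vanishes. Sibling values `W^{(j)}_{2i}`, `W^{(j)}_{2i+1}` depend on disjoint blocks of the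
independent `V_k`, and `W^{(j+1)}_i` is injective in the second of them, so by induction no
`W^{(j)}_i` has atoms and the denominators vanish only on a null set. Hence `|F_n(t)| ≥ |α|⁻¹`
forces `W^{(n)}_0` into an interval of length `2|α|` around `p_n`, which the non-concentration
assumption controls.
-/

open Finset

section BlockInverse

variable {m n R : Type*} [Fintype m] [Fintype n] [CommRing R]

lemma sumElim_zero_dotProduct_mulVec (M : Matrix (m ⊕ n) (m ⊕ n) R) (ψ : m → R) :
    Sum.elim ψ 0 ⬝ᵥ M *ᵥ Sum.elim ψ 0 = ψ ⬝ᵥ M.toBlocks₁₁ *ᵥ ψ := by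
  conv_lhs => rw [← fromBlocks_toBlocks M]
  simp [fromBlocks_mulVec, sumElim_dotProduct_sumElim]

variable [DecidableEq m] [DecidableEq n]

lemma inv_mul_mul_of_mul_eq_one {A : Matrix m n R} {B : Matrix n m R} (hAB : A * B = 1)
    (hBA : B * A = 1) (N : Matrix n n R) : (A * N * B)⁻¹ = A * N⁻¹ * B := by
  by_cases hN : IsUnit N.det
  · refine inv_eq_right_inv ?_
    calc A * N * B * (A * N⁻¹ * B) = A * (N * (B * A) * N⁻¹) * B := by simp only [Matrix.mul_assoc]
      _ = 1 := by rw [hBA, Matrix.mul_one, mul_nonsing_inv N hN, Matrix.mul_one, hAB]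
  · have hM : ¬IsUnit (A * N * B).det := fun hM => hN <| isUnit_det_of_right_inverse <|
      calc N * (B * (A * N * B)⁻¹ * A) = B * A * N * (B * (A * N * B)⁻¹ * A) := by
            rw [hBA, Matrix.one_mul]
        _ = B * ((A * N * B) * (A * N * B)⁻¹) * A := by simp only [Matrix.mul_assoc]
        _ = 1 := by rw [mul_nonsing_inv _ hM, Matrix.mul_one, hBA]
    rw [nonsing_inv_apply_not_isUnit _ hM, nonsing_inv_apply_not_isUnit _ hN, Matrix.mul_zero,
      Matrix.zero_mul]

lemma toBlocks₁₁_inv_fromBlocks (A : Matrix m m R) (B : Matrix m n R) (C : Matrix n m R)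
    {D : Matrix n n R} (hD : IsUnit D) :
    (fromBlocks A B C D)⁻¹.toBlocks₁₁ = (A - B * D⁻¹ * C)⁻¹ := by
  have := hD.invertible
  rw [← invOf_eq_nonsing_inv D]
  by_cases hS : IsUnit (A - B * ⅟D * C)
  · have := hS.invertible
    have := fromBlocks₂₂Invertible A B C D
    rw [← invOf_eq_nonsing_inv, ← invOf_eq_nonsing_inv, invOf_fromBlocks₂₂_eq,
      toBlocks_fromBlocks₁₁]
  · have hM := isUnit_fromBlocks_iff_of_invertible₂₂.not.mpr hS
    rw [isUnit_iff_isUnit_det] at hS hM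
    rw [nonsing_inv_apply_not_isUnit _ hS, nonsing_inv_apply_not_isUnit _ hM]
    rfl

end BlockInverse

lemma inv_diagonal_of_ne_zero {n K : Type*} [Fintype n] [DecidableEq n] [Field K] {d : n → K}
    (hd : ∀ i, d i ≠ 0) : (diagonal d)⁻¹ = diagonal fun i => (d i)⁻¹ := by
  refine inv_eq_right_inv ?_
  rw [diagonal_mul_diagonal, ← diagonal_one]
  exact congrArg diagonal (funext fun i => mul_inv_cancel₀ (hd i))

lemma nullSingletonClass_map_of_injective {α β : Type*} [MeasurableSpace α] [MeasurableSpace β]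
    [MeasurableSingletonClass β] {ν : Measure α} [NullSingletonClass ν] {f : α → β}
    (hf : Measurable f) (hinj : Function.Injective f) : NullSingletonClass (ν.map f) :=
  ⟨fun b => by
    rw [Measure.map_apply hf (measurableSet_singleton b)]
    exact (Set.subsingleton_singleton.preimage hinj).measure_zero ν⟩

lemma ProbabilityTheory.IndepFun.nullSingletonClass_map {Ω α β γ : Type*} [MeasurableSpace Ω]
    {μ : Measure Ω} [IsFiniteMeasure μ] [MeasurableSpace α] [MeasurableSpace β] [MeasurableSpace γ]
    [MeasurableSingletonClass γ] {X : Ω → α} {Y : Ω → β} (hXY : IndepFun X Y μ)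
    (hX : Measurable X) (hY : Measurable Y) [NullSingletonClass (μ.map Y)] {g : α → β → γ}
    (hg : Measurable (Function.uncurry g)) (hinj : ∀ a, Function.Injective (g a)) :
    NullSingletonClass (μ.map fun ω => g (X ω) (Y ω)) := by
  refine ⟨fun c => ?_⟩
  have hc : MeasurableSet (Function.uncurry g ⁻¹' {c}) := hg (measurableSet_singleton c)
  change μ.map (Function.uncurry g ∘ fun ω => (X ω, Y ω)) {c} = 0
  rw [← Measure.map_map hg (hX.prodMk hY),
    (indepFun_iff_map_prod_eq_prod_map_map hX.aemeasurable hY.aemeasurable).mp hXY,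
    Measure.map_apply hg (measurableSet_singleton c), Measure.measure_prod_null hc]
  exact Filter.Eventually.of_forall fun a =>
    (Set.subsingleton_singleton.preimage (hinj a)).measure_zero _

lemma ProbabilityTheory.iIndepFun.indepFun_of_dependsOn {Ω ι β γ γ' : Type*} [MeasurableSpace Ω]
    {μ : Measure Ω} [MeasurableSpace β] [Inhabited β] [MeasurableSpace γ] [MeasurableSpace γ']
    {X : ι → Ω → β} (hX : iIndepFun X μ) (hXm : ∀ i, Measurable (X i)) {S T : Finset ι}
    (hST : Disjoint S T) {F : (ι → β) → γ} {G : (ι → β) → γ'} (hFm : Measurable F)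
    (hGm : Measurable G) (hF : DependsOn F S) (hG : DependsOn G T) :
    IndepFun (fun ω => F (X · ω)) (fun ω => G (X · ω)) μ := by
  classical
  let extend (U : Finset ι) (g : U → β) (i : ι) : β := if h : i ∈ U then g ⟨i, h⟩ else default
  have hext (U : Finset ι) : Measurable (extend U) := measurable_pi_lambda _ fun i => by
    by_cases h : i ∈ U
    · simpa [extend, h] using measurable_pi_apply _
    · simp [extend, h]
  convert (hX.indepFun_finset S T hST hXm).comp (hFm.comp (hext S)) (hGm.comp (hext T)) using 1
  · exact funext fun ω => hF fun i hi => by simp [extend, Finset.mem_coe.mp hi]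
  · exact funext fun ω => hG fun i hi => by simp [extend, Finset.mem_coe.mp hi]

lemma hdist_le_iff {j k r : ℕ} : hdist j k ≤ r ↔ j / 2 ^ r = k / 2 ^ r := by
  have hne : {r | j / 2 ^ r = k / 2 ^ r}.Nonempty :=
    ⟨j + k, by rw [Set.mem_ofPred_eq, Nat.div_eq_of_lt, Nat.div_eq_of_lt] <;>
      exact lt_of_le_of_lt (by omega) Nat.lt_two_pow_self⟩
  refine ⟨fun h => ?_, fun h => Nat.sInf_le h⟩
  obtain ⟨s, rfl⟩ := Nat.exists_eq_add_of_le h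
  have hd : j / 2 ^ hdist j k = k / 2 ^ hdist j k := Nat.sInf_mem hne
  rw [pow_add, ← Nat.div_div_eq_div_mul, ← Nat.div_div_eq_div_mul, hd]

lemma hdist_succ_le_iff {j k r : ℕ} : hdist j k ≤ r + 1 ↔ hdist (j / 2) (k / 2) ≤ r := by
  rw [hdist_le_iff, hdist_le_iff, Nat.div_div_eq_div_mul, Nat.div_div_eq_div_mul, pow_succ']

lemma lapEntryT_succ (p : ℕ → ℝ) (m j k : ℕ) :
    lapEntryT p (m + 1) j k =
      (lapEntryT (shiftSeq p) m (j / 2) (k / 2) + if j / 2 = k / 2 then p 1 else 0) / 2 := by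
  induction m with
  | zero =>
    simp only [lapEntryT, Icc_self, sum_singleton, Icc_eq_empty_of_lt zero_lt_one, sum_empty,
      zero_add, hdist_le_iff, pow_one]
    split_ifs <;> simp_all
  | succ m ih =>
    simp only [lapEntryT] at ih ⊢
    rw [sum_Icc_succ_top (by omega), ih, sum_Icc_succ_top (by omega)]
    simp only [hdist_succ_le_iff, shiftSeq, pow_succ]
    split_ifs <;> ring

noncomputable def lapMatT (p : ℕ → ℝ) (n m : ℕ) : Matrix (Fin (2 ^ n)) (Fin (2 ^ n)) ℝ :=
  of fun j k => lapEntryT p m j k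

lemma HmatT_sub_smul_one (p v : ℕ → ℝ) (n m : ℕ) (t : ℝ) :
    HmatT p v n m - t • 1 = lapMatT p n m + diagonal fun j : Fin (2 ^ n) => v j - t := by
  ext j k
  simp only [HmatT, lapMatT, Matrix.sub_apply, Matrix.add_apply, Matrix.smul_apply, one_apply,
    diagonal_apply, of_apply, smul_eq_mul]
  split_ifs <;> ring

lemma lapMatT_zero (p : ℕ → ℝ) (n : ℕ) : lapMatT p n 0 = 0 := by
  ext
  simp [lapMatT, lapEntryT]

lemma inv_sqrt_two_mul_self : (√2)⁻¹ * (√2)⁻¹ = (2 : ℝ)⁻¹ := by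
  rw [← mul_inv, Real.mul_self_sqrt zero_le_two]

def halfFin {n : ℕ} (j : Fin (2 ^ (n + 1))) : Fin (2 ^ n) :=
  ⟨j / 2, Nat.div_lt_of_lt_mul (by rw [← pow_succ']; exact j.isLt)⟩

@[simp] lemma halfFin_val {n : ℕ} (j : Fin (2 ^ (n + 1))) : (halfFin j : ℕ) = j / 2 := rfl

lemma Uemat_apply {n : ℕ} (j : Fin (2 ^ (n + 1))) (k : Fin (2 ^ n)) :
    Uemat n j k = if halfFin j = k then (√2)⁻¹ else 0 := by
  have h : halfFin j = k ↔ (j : ℕ) = 2 * k ∨ (j : ℕ) = 2 * k + 1 := by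
    rw [Fin.ext_iff, halfFin_val]; omega
  by_cases h1 : (j : ℕ) = 2 * k
  · simp [Uemat, h1, h]
  · by_cases h2 : (j : ℕ) = 2 * k + 1 <;> simp [Uemat, h1, h2, h]

lemma lapMatT_succ (p : ℕ → ℝ) (n m : ℕ) :
    lapMatT p (n + 1) (m + 1) = Uemat n * (lapMatT (shiftSeq p) n m + p 1 • 1) * (Uemat n)ᵀ := by
  ext j j'
  simp only [lapMatT, lapEntryT_succ, of_apply, mul_apply, Uemat_apply, Matrix.add_apply,
    Matrix.smul_apply, one_apply, smul_eq_mul, mul_ite, mul_one, mul_zero, ite_mul, zero_mul,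
    sum_ite_eq, mem_univ, if_true, transpose_apply]
  rw [mul_right_comm, inv_sqrt_two_mul_self]
  simp only [Fin.ext_iff, halfFin_val]
  ring

@[simp] lemma dblFin_val {n : ℕ} (k : Fin (2 ^ n)) : (dblFin k : ℕ) = 2 * k := rfl

@[simp] lemma dblFin1_val {n : ℕ} (k : Fin (2 ^ n)) : (dblFin1 k : ℕ) = 2 * k + 1 := rfl

lemma sum_fin_two_pow_succ {M : Type*} [AddCommMonoid M] {n : ℕ} (f : Fin (2 ^ (n + 1)) → M) :
    ∑ j, f j = ∑ k, (f (dblFin k) + f (dblFin1 k)) := by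
  rw [← (finProdFinEquiv.trans (finCongr (pow_succ 2 n).symm)).sum_comp, Fintype.sum_prod_type]
  refine sum_congr rfl fun k _ => ?_
  rw [Fin.sum_univ_two]
  congr 2 <;> ext <;> simp [add_comm]

def pairMat (n : ℕ) (a b : ℝ) : Matrix (Fin (2 ^ (n + 1))) (Fin (2 ^ n)) ℝ :=
  fun j k => if (j : ℕ) = 2 * k then a else if (j : ℕ) = 2 * k + 1 then b else 0

lemma Uemat_eq_pairMat (n : ℕ) : Uemat n = pairMat n (√2)⁻¹ (√2)⁻¹ := rfl

lemma Ufmat_eq_pairMat (n : ℕ) : Ufmat n = pairMat n (√2)⁻¹ (-(√2)⁻¹) := rfl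

section pairMat

variable {n : ℕ} {a b : ℝ}

lemma pairMat_dblFin (k l : Fin (2 ^ n)) : pairMat n a b (dblFin k) l = if k = l then a else 0 := by
  have : 2 * (k : ℕ) ≠ 2 * l + 1 := by omega
  by_cases h : (k : ℕ) = l <;> simp [pairMat, Fin.ext_iff, h, this]

lemma pairMat_dblFin1 (k l : Fin (2 ^ n)) :
    pairMat n a b (dblFin1 k) l = if k = l then b else 0 := by
  have : 2 * (k : ℕ) + 1 ≠ 2 * l := by omega
  by_cases h : (k : ℕ) = l <;> simp [pairMat, Fin.ext_iff, h, this]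

lemma pairMat_transpose_mulVec (y : Fin (2 ^ (n + 1)) → ℝ) :
    (pairMat n a b)ᵀ *ᵥ y = fun k => a * y (dblFin k) + b * y (dblFin1 k) := by
  ext k
  simp [mulVec, dotProduct, sum_fin_two_pow_succ, pairMat_dblFin, pairMat_dblFin1, ite_mul,
    sum_add_distrib]

lemma pairMat_transpose_mul_diagonal_mul (a' b' : ℝ) (y : Fin (2 ^ (n + 1)) → ℝ) :
    (pairMat n a b)ᵀ * diagonal y * pairMat n a' b' =
      diagonal fun k => a * a' * y (dblFin k) + b * b' * y (dblFin1 k) := by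
  ext k l
  simp only [mul_apply, transpose_apply, diagonal_apply, mul_ite, mul_zero, sum_ite_eq', mem_univ,
    if_true, sum_fin_two_pow_succ, pairMat_dblFin, ite_mul, zero_mul, pairMat_dblFin1,
    sum_add_distrib]
  rcases eq_or_ne k l with rfl | h
  · simp only [if_true]; ring
  · simp [h, h.symm]

lemma pairMat_transpose_mul_pairMat (a' b' : ℝ) :
    (pairMat n a b)ᵀ * pairMat n a' b' = diagonal fun _ => a * a' + b * b' := by
  rw [← Matrix.mul_one (pairMat n a b)ᵀ, ← diagonal_one, pairMat_transpose_mul_diagonal_mul]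
  simp

end pairMat

section Umat

variable (n : ℕ)

lemma Uemat_transpose_mul_Uemat : (Uemat n)ᵀ * Uemat n = 1 := by
  rw [Uemat_eq_pairMat, pairMat_transpose_mul_pairMat, inv_sqrt_two_mul_self]
  norm_num

lemma Uemat_transpose_mul_Ufmat : (Uemat n)ᵀ * Ufmat n = 0 := by
  rw [Uemat_eq_pairMat, Ufmat_eq_pairMat, pairMat_transpose_mul_pairMat]
  simp

lemma Ufmat_transpose_mul_Uemat : (Ufmat n)ᵀ * Uemat n = 0 := by
  rw [Uemat_eq_pairMat, Ufmat_eq_pairMat, pairMat_transpose_mul_pairMat]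
  simp

lemma Ufmat_transpose_mul_Ufmat : (Ufmat n)ᵀ * Ufmat n = 1 := by
  rw [Ufmat_eq_pairMat, pairMat_transpose_mul_pairMat, neg_mul_neg, inv_sqrt_two_mul_self]
  norm_num

lemma Umat_transpose_mul_Umat : (Umat n)ᵀ * Umat n = 1 := by
  rw [Umat, transpose_fromCols, fromRows_mul_fromCols, Uemat_transpose_mul_Uemat,
    Uemat_transpose_mul_Ufmat, Ufmat_transpose_mul_Uemat, Ufmat_transpose_mul_Ufmat, fromBlocks_one]

lemma Umat_mul_Umat_transpose : Umat n * (Umat n)ᵀ = 1 := by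
  rw [Umat, transpose_fromCols, fromCols_mul_fromRows_eq_one_comm
    ((finCongr (by rw [pow_succ, mul_two])).trans finSumFinEquiv.symm), ← transpose_fromCols,
    ← Umat, Umat_transpose_mul_Umat]

variable (x : ℕ → ℝ)

lemma Uemat_transpose_mul_diagonal_mul_Uemat :
    (Uemat n)ᵀ * diagonal (fun j : Fin (2 ^ (n + 1)) => x j) * Uemat n = Vffmat x n := by
  rw [Uemat_eq_pairMat, pairMat_transpose_mul_diagonal_mul, inv_sqrt_two_mul_self, Vffmat]
  congr! 2 with k
  simp only [dblFin_val, dblFin1_val]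
  ring

lemma Uemat_transpose_mul_diagonal_mul_Ufmat :
    (Uemat n)ᵀ * diagonal (fun j : Fin (2 ^ (n + 1)) => x j) * Ufmat n = Vfemat x n := by
  rw [Uemat_eq_pairMat, Ufmat_eq_pairMat, pairMat_transpose_mul_diagonal_mul, mul_neg,
    inv_sqrt_two_mul_self, Vfemat]
  congr! 2 with k
  simp only [dblFin_val, dblFin1_val]
  ring

lemma Ufmat_transpose_mul_diagonal_mul_Uemat :
    (Ufmat n)ᵀ * diagonal (fun j : Fin (2 ^ (n + 1)) => x j) * Uemat n = Vfemat x n := by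
  rw [Uemat_eq_pairMat, Ufmat_eq_pairMat, pairMat_transpose_mul_diagonal_mul, neg_mul,
    inv_sqrt_two_mul_self, Vfemat]
  congr! 2 with k
  simp only [dblFin_val, dblFin1_val]
  ring

lemma Ufmat_transpose_mul_diagonal_mul_Ufmat :
    (Ufmat n)ᵀ * diagonal (fun j : Fin (2 ^ (n + 1)) => x j) * Ufmat n = Vffmat x n := by
  rw [Ufmat_eq_pairMat, pairMat_transpose_mul_diagonal_mul, neg_mul_neg,
    inv_sqrt_two_mul_self, Vffmat]
  congr! 2 with k
  simp only [dblFin_val, dblFin1_val]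
  ring

lemma Umat_transpose_mulVec_phiVec : (Umat n)ᵀ *ᵥ phiVec (n + 1) = Sum.elim (phiVec n) 0 := by
  have hsqrt : √((2 : ℝ) ^ (n + 1)) = √2 * √(2 ^ n) := by
    rw [pow_succ', Real.sqrt_mul zero_le_two]
  rw [Umat, transpose_fromCols, fromRows_mulVec, Uemat_eq_pairMat, Ufmat_eq_pairMat,
    pairMat_transpose_mulVec, pairMat_transpose_mulVec]
  congr 1 <;> ext k <;> simp only [phiVec, hsqrt, Pi.zero_apply]
  · field_simp
    norm_num
  · ring

end Umat

lemma schur_complement_pair {a b : ℝ} (ha : a ≠ 0) (hb : b ≠ 0) (hab : a + b ≠ 0) :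
    (a + b) / 2 - (a - b) / 2 * ((a + b) / 2)⁻¹ * ((a - b) / 2) =
      (1 / (2 * a) + 1 / (2 * b))⁻¹ := by
  have h : 1 / (2 * a) + 1 / (2 * b) = (a + b) / (2 * a * b) := by field_simp; ring
  rw [h, inv_div]
  field_simp
  ring

lemma Umat_transpose_mul_mul_Umat {n : ℕ} (X : Matrix (Fin (2 ^ n)) (Fin (2 ^ n)) ℝ)
    (x : ℕ → ℝ) :
    (Umat n)ᵀ * (Uemat n * X * (Uemat n)ᵀ + diagonal fun j : Fin (2 ^ (n + 1)) => x j) * Umat n =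
      fromBlocks (X + Vffmat x n) (Vfemat x n) (Vfemat x n) (Vffmat x n) := by
  have hconj (a b : Matrix (Fin (2 ^ (n + 1))) (Fin (2 ^ n)) ℝ) :
      aᵀ * (Uemat n * X * (Uemat n)ᵀ + diagonal fun j : Fin (2 ^ (n + 1)) => x j) * b =
        aᵀ * Uemat n * X * ((Uemat n)ᵀ * b) +
          aᵀ * diagonal (fun j : Fin (2 ^ (n + 1)) => x j) * b := by
    simp only [Matrix.mul_add, Matrix.add_mul, Matrix.mul_assoc]
  rw [Umat, transpose_fromCols, fromRows_mul, fromRows_mul_fromCols, hconj, hconj, hconj, hconj,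
    Uemat_transpose_mul_Uemat, Uemat_transpose_mul_Ufmat, Ufmat_transpose_mul_Uemat,
    Uemat_transpose_mul_diagonal_mul_Uemat, Uemat_transpose_mul_diagonal_mul_Ufmat,
    Ufmat_transpose_mul_diagonal_mul_Uemat, Ufmat_transpose_mul_diagonal_mul_Ufmat]
  simp

theorem phiVec_dotProduct_inv_decimate {n : ℕ} (X : Matrix (Fin (2 ^ n)) (Fin (2 ^ n)) ℝ)
    {x : ℕ → ℝ} (hx : ∀ j, x j ≠ 0) (hsum : ∀ k, x (2 * k) + x (2 * k + 1) ≠ 0) :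
    phiVec (n + 1) ⬝ᵥ (Uemat n * X * (Uemat n)ᵀ + diagonal fun j : Fin (2 ^ (n + 1)) => x j)⁻¹ *ᵥ
        phiVec (n + 1) =
      phiVec n ⬝ᵥ (X + diagonal fun k : Fin (2 ^ n) =>
        (1 / (2 * x (2 * k)) + 1 / (2 * x (2 * k + 1)))⁻¹)⁻¹ *ᵥ phiVec n := by
  set M := Uemat n * X * (Uemat n)ᵀ + diagonal fun j : Fin (2 ^ (n + 1)) => x j
  have hM : M = Umat n * fromBlocks (X + Vffmat x n) (Vfemat x n) (Vfemat x n) (Vffmat x n) *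
      (Umat n)ᵀ :=
    calc M = Umat n * (Umat n)ᵀ * M * (Umat n * (Umat n)ᵀ) := by
          rw [Umat_mul_Umat_transpose, Matrix.one_mul, Matrix.mul_one]
      _ = Umat n * ((Umat n)ᵀ * M * Umat n) * (Umat n)ᵀ := by simp only [Matrix.mul_assoc]
      _ = _ := by rw [Umat_transpose_mul_mul_Umat]
  have hd (k : Fin (2 ^ n)) : (x (2 * k) + x (2 * k + 1)) / 2 ≠ 0 :=
    div_ne_zero (hsum k) two_ne_zero
  have hD : IsUnit (Vffmat x n) := by
    rw [Vffmat, isUnit_diagonal, Pi.isUnit_iff]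
    exact fun k => (hd k).isUnit
  rw [hM, inv_mul_mul_of_mul_eq_one (Umat_mul_Umat_transpose n) (Umat_transpose_mul_Umat n),
    ← mulVec_mulVec, ← mulVec_mulVec, dotProduct_mulVec, ← mulVec_transpose,
    Umat_transpose_mulVec_phiVec, sumElim_zero_dotProduct_mulVec,
    toBlocks₁₁_inv_fromBlocks _ _ _ hD, Vffmat, Vfemat, inv_diagonal_of_ne_zero hd,
    diagonal_mul_diagonal, diagonal_mul_diagonal, add_sub_assoc, diagonal_sub]
  congr 5 with k
  exact schur_complement_pair (hx _) (hx _) (hsum k)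

lemma renIter_succ (p : ℕ → ℝ) (j : ℕ) (x : ℕ → ℝ) (k : ℕ) :
    renIter p (j + 1) x k =
      (1 / (2 * renIter p j x (2 * k)) + 1 / (2 * renIter p j x (2 * k + 1)))⁻¹ + p (j + 1) :=
  rfl

lemma renIter_one (p x : ℕ → ℝ) (k : ℕ) :
    renIter p 1 x k = (1 / (2 * x (2 * k)) + 1 / (2 * x (2 * k + 1)))⁻¹ + p 1 :=
  rfl

lemma renIter_shiftSeq (p x : ℕ → ℝ) (j k : ℕ) :
    renIter (shiftSeq p) j (renIter p 1 x) k = renIter p (j + 1) x k := by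
  induction j generalizing k with
  | zero => rfl
  | succ j ih => rw [renIter_succ, ih, ih, renIter_succ p (j + 1)]; rfl

lemma add_ne_zero_of_renIter_one_ne {p x : ℕ → ℝ} {k : ℕ} (h : renIter p 1 x k ≠ p 1) :
    x (2 * k) + x (2 * k + 1) ≠ 0 := by
  intro hs
  apply h
  rw [renIter_one, eq_neg_of_add_eq_zero_right hs]
  simp

theorem phiVec_dotProduct_inv_lapMatT_add_diagonal (n : ℕ) {p x : ℕ → ℝ}
    (h0 : ∀ j i, renIter p j x i ≠ 0) (h1 : ∀ j i, renIter p (j + 1) x i ≠ p (j + 1)) :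
    phiVec (n + 1) ⬝ᵥ (lapMatT p (n + 1) n + diagonal fun j : Fin (2 ^ (n + 1)) => x j)⁻¹ *ᵥ
        phiVec (n + 1) = (renIter p (n + 1) x 0 - p (n + 1))⁻¹ := by
  induction n generalizing p x with
  | zero =>
    have hh (k : ℕ) : (1 / (2 * x (2 * k)) + 1 / (2 * x (2 * k + 1)))⁻¹ ≠ 0 := fun h =>
      h1 0 k (by rw [renIter_one, h, zero_add])
    rw [lapMatT_zero, ← Matrix.zero_mul (Uemat 0)ᵀ, ← Matrix.mul_zero (Uemat 0),
      phiVec_dotProduct_inv_decimate (x := x) _ (h0 0)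
        fun k => add_ne_zero_of_renIter_one_ne (h1 0 k),
      zero_add, inv_diagonal_of_ne_zero fun k : Fin (2 ^ 0) => hh k]
    simp [phiVec, dotProduct, renIter_one]
  | succ n ih =>
    have hdiag : (fun k : Fin (2 ^ (n + 1)) =>
        p 1 + (1 / (2 * x (2 * k)) + 1 / (2 * x (2 * k + 1)))⁻¹) =
        fun k : Fin (2 ^ (n + 1)) => renIter p 1 x k :=
      funext fun k => by rw [renIter_one, add_comm]
    rw [lapMatT_succ, phiVec_dotProduct_inv_decimate (x := x) _ (h0 0)
      fun k => add_ne_zero_of_renIter_one_ne (h1 0 k), add_assoc, smul_one_eq_diagonal,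
      diagonal_add, hdiag, ih (fun j i => renIter_shiftSeq p x j i ▸ h0 (j + 1) i)
      (fun j i => renIter_shiftSeq p x (j + 1) i ▸ h1 (j + 1) i), renIter_shiftSeq]
    rfl

lemma measurable_renIter (p : ℕ → ℝ) (j i : ℕ) : Measurable fun x : ℕ → ℝ => renIter p j x i := by
  induction j generalizing i with
  | zero => exact measurable_pi_apply i
  | succ j ih =>
    simp only [renIter_succ, one_div]
    have := ih (2 * i)
    have := ih (2 * i + 1)
    fun_prop

lemma dependsOn_renIter (p : ℕ → ℝ) (j i : ℕ) :
    DependsOn (fun x : ℕ → ℝ => renIter p j x i) (Set.Ico (i * 2 ^ j) ((i + 1) * 2 ^ j)) := by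
  induction j generalizing i with
  | zero => exact fun x y h => h i (by simp)
  | succ j ih =>
    have hsub (k : ℕ) (hk : k = 2 * i ∨ k = 2 * i + 1) :
        Set.Ico (k * 2 ^ j) ((k + 1) * 2 ^ j) ⊆
          Set.Ico (i * 2 ^ (j + 1)) ((i + 1) * 2 ^ (j + 1)) := by
      apply Set.Ico_subset_Ico <;> rcases hk with rfl | rfl <;> rw [pow_succ] <;>
        nlinarith [Nat.zero_le (2 ^ j)]
    intro x y h
    simp only [renIter_succ, (ih (2 * i)).mono (hsub _ (.inl rfl)) h,
      (ih (2 * i + 1)).mono (hsub _ (.inr rfl)) h]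

lemma renIter_step_injective (q a : ℝ) :
    Function.Injective fun b : ℝ => (1 / (2 * a) + 1 / (2 * b))⁻¹ + q := fun b₁ b₂ h => by
  simpa using h

lemma nullSingletonClass_map_renIter {Ω : Type*} [MeasurableSpace Ω] {μ : Measure Ω}
    {X : ℕ → Ω → ℝ} (hX : iIndepFun X μ) (hXm : ∀ k, Measurable (X k))
    (hX0 : ∀ k, NullSingletonClass (μ.map (X k))) (p : ℕ → ℝ) (j i : ℕ) :
    NullSingletonClass (μ.map fun ω => renIter p j (X · ω) i) := by
  have := hX.isProbabilityMeasure
  induction j generalizing i with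
  | zero => exact hX0 i
  | succ j ih =>
    have hW (k : ℕ) : Measurable fun ω => renIter p j (X · ω) k :=
      (measurable_renIter p j k).comp (measurable_pi_lambda _ hXm)
    have hind := hX.indepFun_of_dependsOn hXm
      (Finset.Ico_disjoint_Ico_consecutive (2 * i * 2 ^ j) ((2 * i + 1) * 2 ^ j)
        ((2 * i + 1 + 1) * 2 ^ j))
      (measurable_renIter p j (2 * i)) (measurable_renIter p j (2 * i + 1))
      (by simpa using dependsOn_renIter p j (2 * i))
      (by simpa using dependsOn_renIter p j (2 * i + 1))
    have := ih (2 * i + 1)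
    exact hind.nullSingletonClass_map (hW _) (hW _)
      (g := fun a b => (1 / (2 * a) + 1 / (2 * b))⁻¹ + p (j + 1)) (by fun_prop)
      fun a => renIter_step_injective _ a

lemma ae_renIter_nondegenerate {Ω : Type*} [MeasurableSpace Ω] {μ : Measure Ω}
    {X : ℕ → Ω → ℝ} (hX : iIndepFun X μ) (hXm : ∀ k, Measurable (X k))
    (hX0 : ∀ k, NullSingletonClass (μ.map (X k))) (p : ℕ → ℝ) :
    ∀ᵐ ω ∂μ, (∀ j i, renIter p j (X · ω) i ≠ 0) ∧
      ∀ j i, renIter p (j + 1) (X · ω) i ≠ p (j + 1) := by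
  have hne (j i : ℕ) (s : ℝ) : ∀ᵐ ω ∂μ, renIter p j (X · ω) i ≠ s := by
    have := nullSingletonClass_map_renIter hX hXm hX0 p j i
    exact ae_of_ae_map ((measurable_renIter p j i).comp (measurable_pi_lambda _ hXm)).aemeasurable
      (Measure.ae_ne (μ.map fun ω => renIter p j (X · ω) i) s)
  simp only [Filter.eventually_and, ae_all_iff]
  exact ⟨fun j i => hne j i 0, fun j i => hne (j + 1) i (p (j + 1))⟩

lemma mem_Icc_of_inv_abs_le_abs_inv_sub {a w q : ℝ} (ha : a ≠ 0) (h : |a|⁻¹ ≤ |(w - q)⁻¹|) :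
    w ∈ Set.Icc (q - |a|) (q + |a|) := by
  rcases eq_or_ne w q with rfl | hw
  · simp [ha] at h
  rw [abs_inv, inv_le_inv₀ (abs_pos.mpr ha) (abs_pos.mpr (sub_ne_zero.mpr hw)), abs_le] at h
  constructor <;> linarith [h.1, h.2]

theorem F_tail_bound_general
    {Ω : Type*} [MeasurableSpace Ω] (Pr : Measure Ω)
    (c : ℝ) (p : ℕ → ℝ)
    (V : ℕ → Ω → ℝ) (hVmeas : ∀ k, Measurable (V k))
    (hViid : iIndepFun V Pr)
    (ρ : ℝ → ℝ)
    (hρ : ∀ k, Measure.map (V k) Pr = volume.withDensity fun v => ENNReal.ofReal (ρ v))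
    (I : Set ℝ) (δ : ℝ) (hNC : NonConc Pr p V I c δ) :
    ∃ C : ℝ, 0 ≤ C ∧ ∀ n : ℕ, 1 ≤ n → ∀ t ∈ I, ∀ α : ℝ, α ≠ 0 →
      Pr {ω | |α|⁻¹ ≤
          |phiVec n ⬝ᵥ (HmatT p (fun i => V i ω) n (n - 1) -
            t • (1 : Matrix (Fin (2 ^ n)) (Fin (2 ^ n)) ℝ))⁻¹.mulVec (phiVec n)|}
        ≤ ENNReal.ofReal (C * 2 ^ ((c - δ) * (n : ℝ)) * |α|) := by
  obtain ⟨K, hK, hbound⟩ := hNC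
  refine ⟨2 * K, by positivity, fun n hn t ht α hα => ?_⟩
  obtain ⟨n, rfl⟩ := Nat.exists_eq_add_of_le' hn
  have hX0 (k : ℕ) : NullSingletonClass (Pr.map fun ω => V k ω - t) := by
    rw [show (fun ω => V k ω - t) = (· - t) ∘ V k from rfl,
      ← Measure.map_map (measurable_sub_const t) (hVmeas k), hρ k]
    exact nullSingletonClass_map_of_injective (measurable_sub_const t) sub_left_injective
  have hae := ae_renIter_nondegenerate (X := fun k ω => V k ω - t) (hViid.comp (fun _ v => v - t)
    fun _ => measurable_sub_const t) (fun k => (hVmeas k).sub_const t) hX0 p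
  let A := Set.Icc (p (n + 1) - |α|) (p (n + 1) + |α|)
  calc _ ≤ Pr {ω | renIter p (n + 1) (fun k => V k ω - t) 0 ∈ A} := by
        refine measure_mono_ae (hae.mono fun ω ⟨h0, h1⟩ hω => ?_)
        replace hω : |α|⁻¹ ≤ |phiVec (n + 1) ⬝ᵥ (HmatT p (fun i => V i ω) (n + 1) n - t • 1)⁻¹ *ᵥ
            phiVec (n + 1)| := hω
        rw [HmatT_sub_smul_one, phiVec_dotProduct_inv_lapMatT_add_diagonal n h0 h1] at hω
        exact mem_Icc_of_inv_abs_le_abs_inv_sub hα hω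
    _ ≤ ENNReal.ofReal (K * 2 ^ ((c - δ) * ((n + 1 : ℕ) : ℝ))) * volume A :=
        hbound (n + 1) (by omega) t ht A measurableSet_Icc
    _ = _ := by
        rw [Real.volume_Icc, ← ENNReal.ofReal_mul (by positivity)]
        congr 1
        ring

/-- **Tail bound for `F_n(t)`** (Lemma, part ii): under the non-concentration assumption
on `I` with exponent `δ`, there is `C < ∞` such that
`P(|F_n(t)| ≥ |α|⁻¹) ≤ C 2^{(c-δ) n} |α|` for all `n ≥ 1`, `t ∈ I`, `α ≠ 0`, where
`F_n(t) = ⟨φ_n, (H_{n,n-1} - t)^{-1} φ_n⟩`. -/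
theorem F_tail_bound
    {Ω : Type*} [MeasurableSpace Ω] (Pr : Measure Ω) [IsProbabilityMeasure Pr]
    (c ε : ℝ) (hc : 0 < c) (hε : 0 < ε)
    (p : ℕ → ℝ) (hp : ∀ r : ℕ, 1 ≤ r → |p r| ≤ ε * 2 ^ (-(c * (r : ℝ))))
    (V : ℕ → Ω → ℝ) (hVmeas : ∀ k, Measurable (V k))
    (hViid : iIndepFun V Pr)
    (ρ : ℝ → ℝ) (hρpos : ∀ v, 0 ≤ ρ v)
    (hρ : ∀ k, Measure.map (V k) Pr = volume.withDensity fun v => ENNReal.ofReal (ρ v))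
    (hρbd : ∃ M : ℝ, ∀ v, ρ v ≤ M)
    (I : Set ℝ) (δ : ℝ) (hδ : 0 < δ) (hNC : NonConc Pr p V I c δ) :
    ∃ C : ℝ, 0 ≤ C ∧ ∀ n : ℕ, 1 ≤ n → ∀ t ∈ I, ∀ α : ℝ, α ≠ 0 →
      Pr {ω | |α|⁻¹ ≤
          |phiVec n ⬝ᵥ (HmatT p (fun i => V i ω) n (n - 1) -
            t • (1 : Matrix (Fin (2 ^ n)) (Fin (2 ^ n)) ℝ))⁻¹.mulVec (phiVec n)|}
        ≤ ENNReal.ofReal (C * 2 ^ ((c - δ) * (n : ℝ)) * |α|) :=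
  F_tail_bound_general Pr c p V hVmeas hViid ρ hρ I δ hNC
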